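/- arXiv:2508.04737 — 2 statements merged into one kernel-verified Lean document; each statement's English description precedes it below -/
import Mathlib

section
/- For the output state ψ of the three-qubit quantum-switch circuit, the conditional distribution of the target measurement outcome given the control value differs between the two control values: P(t=1 | c=0) = 1/2 while P(t=1 | c=1) = 1, where P(t|c) = P(c,t)/(P(c,0)+P(c,1)). In particular, conditioning on the control qubit does not screen off the influence of the fixed preparation on the target outcome, exhibiting the failure of the classical action/observation exchange rule (Rule 2) in this circuit. -/
open Matrix Kronecker

noncomputable section

/-- The Hadamard matrix. -/
def Hm : Matrix (Fin 2) (Fin 2) ℂ := (Real.sqrt 2 : ℂ)⁻¹ • !![1, 1; 1, -1]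
/-- The Pauli-X matrix. -/
def Xm : Matrix (Fin 2) (Fin 2) ℂ := !![0, 1; 1, 0]

/-- The permutation on basis labels implemented by CSWAP (q0 is the control):
`(c,a,b) ↦ (c,a,b)` if `c = 0` and `(c,a,b) ↦ (c,b,a)` if `c = 1`. -/
def cswapPerm : Fin 2 × Fin 2 × Fin 2 → Fin 2 × Fin 2 × Fin 2 :=
  fun p => if p.1 = 0 then p else (p.1, p.2.2, p.2.1)

/-- The controlled-swap unitary on `ℂ²⊗ℂ²⊗ℂ² ≅ ℂ⁸`. -/
def CSWAP : Matrix (Fin 2 × Fin 2 × Fin 2) (Fin 2 × Fin 2 × Fin 2) ℂ :=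
  Matrix.of fun i j => if i = cswapPerm j then 1 else 0

/-- The standard basis vector `|c,t,a⟩` of `ℂ⁸`. -/
def basis3 (c t a : Fin 2) : Fin 2 × Fin 2 × Fin 2 → ℂ :=
  fun p => if p = (c, t, a) then 1 else 0

/-- The three-qubit quantum-switch circuit
`U = CSWAP · (I₂ ⊗ H ⊗ X) · CSWAP · (H ⊗ I₂ ⊗ I₂)`. -/
def Ucirc : Matrix (Fin 2 × Fin 2 × Fin 2) (Fin 2 × Fin 2 × Fin 2) ℂ :=
  CSWAP * ((1 : Matrix (Fin 2) (Fin 2) ℂ) ⊗ₖ (Hm ⊗ₖ Xm)) * CSWAP *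
    (Hm ⊗ₖ ((1 : Matrix (Fin 2) (Fin 2) ℂ) ⊗ₖ (1 : Matrix (Fin 2) (Fin 2) ℂ)))

/-- The output state `ψ = U|0,0,0⟩` of the circuit. -/
def ψout : Fin 2 × Fin 2 × Fin 2 → ℂ := Ucirc.mulVec (basis3 0 0 0)

/-- The joint probability `P(c,t) = Σ_a |⟨c,t,a|ψ⟩|²` of measuring control `c`
and target `t` in the computational basis. -/
def Pjoint (c t : Fin 2) : ℝ := ∑ a : Fin 2, Complex.normSq (ψout (c, t, a))


/-- The conditional probability `P(t|c) = P(c,t)/(P(c,0)+P(c,1))` of target outcome `t`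
given control outcome `c`. -/
def Pcond (t c : Fin 2) : ℝ := Pjoint c t / (Pjoint c 0 + Pjoint c 1)


set_option maxHeartbeats 1000000 in
lemma psi_val (c t a : Fin 2) : ψout (c,t,a) =
    if a = 0 ∧ (c,t) ≠ (1,1) then 0 else if c = 1 ∧ t = 0 then 0 else 1/2 := by
  have h2sq : (Real.sqrt 2 : ℂ)^2 = 2 := by
    have := Real.sq_sqrt (show (0:ℝ) ≤ 2 by norm_num)
    exact_mod_cast this
  fin_cases c <;> fin_cases t <;> fin_cases a <;>
  · simp only [ψout, Ucirc, Matrix.mulVec, dotProduct, Matrix.mul_apply,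
      Fintype.sum_prod_type, Fin.sum_univ_two, basis3, CSWAP, cswapPerm, Hm, Xm,
      Matrix.kroneckerMap_apply, Matrix.one_apply, Prod.mk.injEq, Matrix.smul_apply,
      Matrix.of_apply, Matrix.cons_val', Matrix.cons_val_zero, Matrix.cons_val_one,
      Matrix.head_cons, Matrix.head_fin_const, Matrix.empty_val',
      Matrix.cons_val_fin_one, smul_eq_mul]
    norm_num [Prod.ext_iff]
    try field_simp
    try ring_nf
    try simp [h2sq]

lemma Pjoint_val (c t : Fin 2) : Pjoint c t =
    if c = 1 ∧ t = 0 then 0 else if c = 1 then 1/2 else 1/4 := by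
  fin_cases c <;> fin_cases t <;>
    norm_num [Pjoint, Fin.sum_univ_two, psi_val, Complex.normSq_apply]

/-- `P(t=1 | c=0) = 1/2` while `P(t=1 | c=1) = 1`: the conditional distribution of the
target outcome differs between the two control values, exhibiting the failure of the
classical action/observation exchange rule (Rule 2) in this circuit. -/
theorem quantum_switch_rule2_violation :
    Pcond 1 0 = 1 / 2 ∧ Pcond 1 1 = 1 ∧ Pcond 1 0 ≠ Pcond 1 1 := by
  norm_num [Pcond, Pjoint_val]
end
end

section
/- Let A and B be 2×2 complex unitary matrices and ψ = U(A,B)|0,0,0⟩ the output of the generalized three-qubit routing circuit. Then the conditional target-measurement distributions are P(t | c=0) = |⟨t| A |0⟩|² and P(t | c=1) = |⟨t| B |0⟩|² for t ∈ {0,1}, where P(c,t) = Σ_{a∈{0,1}} |⟨c,t,a|ψ⟩|² and P(t|c) = P(c,t)/(P(c,0)+P(c,1)). Consequently, whenever |⟨t| A |0⟩|² ≠ |⟨t| B |0⟩|² for some t, the conditional distribution of the target outcome depends on the control value. -/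
open Matrix Kronecker

noncomputable section

/-- Kronecker (tensor) product of vectors. -/
def vecKron {m n : Type*} (x : m → ℂ) (y : n → ℂ) : m × n → ℂ :=
  fun p => x p.1 * y p.2

def ket0 : Fin 2 → ℂ := ![1, 0]
def ket1 : Fin 2 → ℂ := ![0, 1]

/-- The generalized three-qubit routing circuit
`U(A,B) = CSWAP · (I₂ ⊗ A ⊗ B) · CSWAP · (H ⊗ I₂ ⊗ I₂)`. -/
def Ugen (A B : Matrix (Fin 2) (Fin 2) ℂ) :
    Matrix (Fin 2 × Fin 2 × Fin 2) (Fin 2 × Fin 2 × Fin 2) ℂ :=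
  CSWAP * ((1 : Matrix (Fin 2) (Fin 2) ℂ) ⊗ₖ (A ⊗ₖ B)) * CSWAP *
    (Hm ⊗ₖ ((1 : Matrix (Fin 2) (Fin 2) ℂ) ⊗ₖ (1 : Matrix (Fin 2) (Fin 2) ℂ)))


/-- Joint probability `P(c,t) = Σ_a |⟨c,t,a|ψ⟩|²` for the output state
`ψ = U(A,B)|0,0,0⟩`. -/
def PgJoint (A B : Matrix (Fin 2) (Fin 2) ℂ) (c t : Fin 2) : ℝ :=
  ∑ a : Fin 2, Complex.normSq ((Ugen A B).mulVec (basis3 0 0 0) (c, t, a))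

/-- Conditional probability `P(t|c) = P(c,t)/(P(c,0)+P(c,1))`. -/
def PgCond (A B : Matrix (Fin 2) (Fin 2) ℂ) (t c : Fin 2) : ℝ :=
  PgJoint A B c t / (PgJoint A B c 0 + PgJoint A B c 1)


lemma amp (A B : Matrix (Fin 2) (Fin 2) ℂ) (c t a : Fin 2) :
    (Ugen A B).mulVec (basis3 0 0 0) (c, t, a) =
      if c = 0 then (Real.sqrt 2 : ℂ)⁻¹ * (A t 0 * B a 0)
      else (Real.sqrt 2 : ℂ)⁻¹ * (A a 0 * B t 0) := by
  fin_cases c <;> fin_cases t <;> fin_cases a <;>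
    simp [Ugen, Matrix.mulVec, Matrix.mul_apply, Fintype.sum_prod_type, Fin.sum_univ_two,
      CSWAP, cswapPerm, basis3, Hm, Matrix.kroneckerMap_apply, Matrix.one_apply, dotProduct,
      Matrix.smul_apply] <;> norm_num [Prod.ext_iff] <;> ring

lemma colnorm (A : Matrix (Fin 2) (Fin 2) ℂ) (h : A ∈ unitary (Matrix (Fin 2) (Fin 2) ℂ)) :
    Complex.normSq (A 0 0) + Complex.normSq (A 1 0) = 1 := by
  have h1 := Matrix.ext_iff.2 h.1 0 0
  simp [Matrix.mul_apply, Fin.sum_univ_two, Matrix.one_apply, Matrix.conjTranspose_apply] at h1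
  have h2 := congrArg Complex.re h1
  simp [mul_comm, Complex.mul_conj] at h2
  exact_mod_cast h2

lemma pj0 (A B : Matrix (Fin 2) (Fin 2) ℂ) (hB : B ∈ unitary (Matrix (Fin 2) (Fin 2) ℂ))
    (t : Fin 2) : PgJoint A B 0 t = 2⁻¹ * Complex.normSq (A t 0) := by
  have hb := colnorm B hB
  simp [PgJoint, amp, Fin.sum_univ_two, Complex.normSq_mul, Complex.normSq_inv,
    Complex.normSq_ofReal, Real.mul_self_sqrt]
  linear_combination (2⁻¹ * Complex.normSq (A t 0)) * hb

lemma pj1 (A B : Matrix (Fin 2) (Fin 2) ℂ) (hA : A ∈ unitary (Matrix (Fin 2) (Fin 2) ℂ))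
    (t : Fin 2) : PgJoint A B 1 t = 2⁻¹ * Complex.normSq (B t 0) := by
  have ha := colnorm A hA
  simp [PgJoint, amp, Fin.sum_univ_two, Complex.normSq_mul, Complex.normSq_inv,
    Complex.normSq_ofReal, Real.mul_self_sqrt]
  linear_combination (2⁻¹ * Complex.normSq (B t 0)) * ha

/-- The conditional target distributions are `P(t|c=0) = |⟨t|A|0⟩|²` and
`P(t|c=1) = |⟨t|B|0⟩|²`; hence whenever `|⟨t|A|0⟩|² ≠ |⟨t|B|0⟩|²` for some `t`, the
conditional distribution of the target outcome depends on the control value. -/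
theorem routing_circuit_conditional_distributions (A B : Matrix (Fin 2) (Fin 2) ℂ)
    (hA : A ∈ unitary (Matrix (Fin 2) (Fin 2) ℂ))
    (hB : B ∈ unitary (Matrix (Fin 2) (Fin 2) ℂ)) :
    (∀ t : Fin 2, PgCond A B t 0 = Complex.normSq (A t 0)) ∧
    (∀ t : Fin 2, PgCond A B t 1 = Complex.normSq (B t 0)) ∧
    ((∃ t : Fin 2, Complex.normSq (A t 0) ≠ Complex.normSq (B t 0)) →
      ∃ t : Fin 2, PgCond A B t 0 ≠ PgCond A B t 1) := by
  have ha := colnorm A hA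
  have hb := colnorm B hB
  have h0 : ∀ t : Fin 2, PgCond A B t 0 = Complex.normSq (A t 0) := by
    intro t
    rw [PgCond, pj0 A B hB, pj0 A B hB, pj0 A B hB, ← mul_add, ha]
    ring
  have h1 : ∀ t : Fin 2, PgCond A B t 1 = Complex.normSq (B t 0) := by
    intro t
    rw [PgCond, pj1 A B hA, pj1 A B hA, pj1 A B hA, ← mul_add, hb]
    ring
  refine ⟨h0, h1, fun ⟨t, ht⟩ => ⟨t, by rw [h0, h1]; exact ht⟩⟩
end
end
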